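/- arXiv:2407.19057 — 2 statements merged into one kernel-verified Lean document; each statement's English description precedes it below -/
import Mathlib

section
/- Let N be a positive natural number, ψ : Fin N → ℝ, with mean ψ̄ = (1/N)·Σᵢ ψᵢ, and let BC be a real number. If 1 - 2·ψ̄·(1 - BC) ≥ (1/N)·Σᵢ (ψᵢ² + (1-ψᵢ)²), then (1/N)·Σᵢ (ψᵢ - ψ̄)² ≤ ψ̄·(BC - ψ̄). -/
/-- Proposition 1 (probandwise concordance inequality): if the proportion of
homogeneous twin pairs `1 - 2ψ̄(1-BC)` is at least the average of `ψᵢ² + (1-ψᵢ)²`,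
then the population variance of the propensity probabilities is at most
`ψ̄(BC - ψ̄)`. -/
theorem probandwise_concordance_inequality (N : ℕ) (hN : 0 < N) (ψ : Fin N → ℝ)
    (psiBar BC : ℝ)
    (hmean : psiBar = (1 / (N : ℝ)) * ∑ i, ψ i)
    (hassump : 1 - 2 * psiBar * (1 - BC) ≥ (1 / (N : ℝ)) * ∑ i, (ψ i ^ 2 + (1 - ψ i) ^ 2)) :
    (1 / (N : ℝ)) * ∑ i, (ψ i - psiBar) ^ 2 ≤ psiBar * (BC - psiBar) := by
  have hNne : (N : ℝ) ≠ 0 := Nat.cast_ne_zero.mpr hN.ne'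
  have hsum : ∑ i, ψ i = (N : ℝ) * psiBar := by
    rw [hmean]; field_simp
  have hexp : ∑ i, (ψ i ^ 2 + (1 - ψ i) ^ 2)
      = 2 * (∑ i, ψ i ^ 2) - 2 * ((N : ℝ) * psiBar) + N := by
    calc ∑ i, (ψ i ^ 2 + (1 - ψ i) ^ 2)
        = ∑ i, (2 * ψ i ^ 2 - 2 * ψ i + 1) := Finset.sum_congr rfl (fun i _ => by ring)
      _ = 2 * (∑ i, ψ i ^ 2) - 2 * (∑ i, ψ i) + N := by
          rw [Finset.sum_add_distrib, Finset.sum_sub_distrib, ← Finset.mul_sum,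
            ← Finset.mul_sum]
          simp
      _ = 2 * (∑ i, ψ i ^ 2) - 2 * ((N : ℝ) * psiBar) + N := by rw [hsum]
  have hvar : ∑ i, (ψ i - psiBar) ^ 2
      = (∑ i, ψ i ^ 2) - (N : ℝ) * psiBar ^ 2 := by
    have : ∀ i : Fin N, (ψ i - psiBar) ^ 2 = ψ i ^ 2 - 2 * psiBar * ψ i + psiBar ^ 2 := by
      intro i; ring
    simp only [this, Finset.sum_add_distrib, Finset.sum_sub_distrib, ← Finset.mul_sum,
      Finset.sum_const, Finset.card_fin, nsmul_eq_mul, hsum]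
    ring
  rw [hexp] at hassump
  have hS : (∑ i, ψ i ^ 2) ≤ (N : ℝ) * (psiBar * BC) := by
    have hNpos : (0:ℝ) < N := Nat.cast_pos.mpr hN
    rw [ge_iff_le, div_mul_eq_mul_div, div_le_iff₀ hNpos] at hassump
    nlinarith
  rw [hvar]
  have hNpos : (0:ℝ) < N := Nat.cast_pos.mpr hN
  rw [div_mul_eq_mul_div, div_le_iff₀ hNpos]
  nlinarith
end

section
/- Let n > 0 and let C, D, U be natural numbers with C + D + U = n and 2C + D > 0. Let ψ : Fin n → ℝ be propensity probabilities of the twin pairs, and suppose the mean satisfies (1/n)·Σⱼ ψⱼ = (2C+D)/(2n) (the twin population is representative, so the mean propensity equals the trait proportion). Define BC = 2C/(2C+D), ψ̄ = (2C+D)/(2n), and V = (U+C)/n. If V ≥ (1/n)·Σⱼ (ψⱼ² + (1-ψⱼ)²), then (1/n)·Σⱼ (ψⱼ - ψ̄)² ≤ ψ̄·(BC - ψ̄). -/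
/-- Proposition 1 in the twin-study setting: with `n` twin pairs, counts `C`, `D`, `U`
of concordant-affected, discordant, and concordant-unaffected pairs, propensity
probabilities `ψⱼ` whose mean equals the trait proportion `ψ̄ = (2C+D)/(2n)`, if the
proportion of homogeneous pairs `V = (U+C)/n` is at least the average of
`ψⱼ² + (1-ψⱼ)²`, then the variance of the `ψⱼ` is at most `ψ̄(BC - ψ̄)`, where
`BC = 2C/(2C+D)` is the probandwise concordance. -/
theorem probandwise_concordance_inequality_twins (n C D U : ℕ) (hn : 0 < n)
    (hsum : C + D + U = n) (hpos : 0 < 2 * C + D)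
    (ψ : Fin n → ℝ)
    (BC psiBar V : ℝ)
    (hBC : BC = (2 * C : ℝ) / (2 * C + D))
    (hpsi : psiBar = ((2 * C + D : ℕ) : ℝ) / (2 * n))
    (hV : V = ((U + C : ℕ) : ℝ) / n)
    (hmean : (1 / (n : ℝ)) * ∑ j, ψ j = psiBar)
    (hassump : V ≥ (1 / (n : ℝ)) * ∑ j, (ψ j ^ 2 + (1 - ψ j) ^ 2)) :
    (1 / (n : ℝ)) * ∑ j, (ψ j - psiBar) ^ 2 ≤ psiBar * (BC - psiBar) := by
  have hN : (0 : ℝ) < (n : ℝ) := by exact_mod_cast hn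
  have hcd : (0 : ℝ) < 2 * (C : ℝ) + D := by
    have := hpos
    push_cast at this ⊢
    exact_mod_cast this
  have hsumR : (C : ℝ) + D + U = n := by exact_mod_cast hsum
  set S1 : ℝ := ∑ j, ψ j with hS1
  set S2 : ℝ := ∑ j, ψ j ^ 2 with hS2
  have h1 : ∑ j, (ψ j - psiBar) ^ 2 = S2 - 2 * psiBar * S1 + n * psiBar ^ 2 := by
    have : ∀ j : Fin n, (ψ j - psiBar) ^ 2 = ψ j ^ 2 - 2 * psiBar * ψ j + psiBar ^ 2 := by
      intro j; ring
    rw [Finset.sum_congr rfl fun j _ => this j]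
    rw [Finset.sum_add_distrib, Finset.sum_sub_distrib, ← Finset.mul_sum,
      Finset.sum_const, Finset.card_univ, Fintype.card_fin, nsmul_eq_mul]
  have h2 : ∑ j, (ψ j ^ 2 + (1 - ψ j) ^ 2) = 2 * S2 - 2 * S1 + n := by
    have : ∀ j : Fin n, ψ j ^ 2 + (1 - ψ j) ^ 2 = 2 * ψ j ^ 2 - 2 * ψ j + 1 := by
      intro j; ring
    rw [Finset.sum_congr rfl fun j _ => this j]
    rw [Finset.sum_add_distrib, Finset.sum_sub_distrib, ← Finset.mul_sum, ← Finset.mul_sum,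
      Finset.sum_const, Finset.card_univ, Fintype.card_fin, nsmul_eq_mul, mul_one]
  have hS1val : S1 = n * psiBar := by
    field_simp at hmean
    linarith [hmean]
  -- key: psiBar * BC = C / n
  have hkey : psiBar * BC = (C : ℝ) / n := by
    rw [hpsi, hBC]
    push_cast
    field_simp
  -- assumption gives S2 ≤ C
  have hS2le : S2 ≤ (C : ℝ) := by
    rw [h2, hV] at hassump
    push_cast at hassump
    have hne : (n : ℝ) ≠ 0 := ne_of_gt hN
    have h3 := mul_le_mul_of_nonneg_left hassump hN.le
    rw [mul_div_cancel₀ _ hne] at h3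
    rw [show (n:ℝ) * (1 / n * (2 * S2 - 2 * S1 + n)) = (n * (1/n)) * (2*S2 - 2*S1 + n) by ring,
      one_div, mul_inv_cancel₀ hne, one_mul] at h3
    have hS1' : 2 * S1 = 2 * (C : ℝ) + D := by
      rw [hS1val, hpsi]; push_cast; field_simp
    linarith [h3, hS1', hsumR]
  rw [h1, hS1val]
  have heq : (1 / (n : ℝ)) * (S2 - 2 * psiBar * (n * psiBar) + n * psiBar ^ 2)
      = S2 / n - psiBar ^ 2 := by field_simp; ring
  rw [heq]
  have : psiBar * (BC - psiBar) = (C : ℝ) / n - psiBar ^ 2 := by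
    rw [mul_sub, hkey]; ring
  rw [this]
  gcongr
end
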